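/- arXiv:1905.11505 — 2 statements merged into one kernel-verified Lean document; each statement's English description precedes it below -/
import Mathlib

section
/- (Corollary 1, Kolmogorov–Smirnov version.) Let r be a probability measure on a measurable parameter space Θ and D ⊆ Θ a measurable set with w := r(D) > 0 (Assumption 1). For each n ∈ ℕ, let κ_n be a Markov kernel from Θ to [0,1] such that κ_n(θ) is the uniform distribution on [0,1] for every θ ∉ D, and for every θ ∈ D and every ε > 0, κ_n(θ)([0,ε]) → 1 as n → ∞ (Assumption 2: local p-values are uniform under correct specification and converge to 0 in probability under misspecification). For B, n ∈ ℕ, let θ_1,…,θ_B be i.i.d. with law r and, conditionally on them, let p_1,…,p_B be independent with p_i ∼ κ_n(θ_i); let S_{B,n} = sup_{t∈[0,1]} |F̂_B(t) − t| be the Kolmogorov–Smirnov statistic of the p-values, and let c_B(α) be the (1−α)-quantile of the KS statistic computed from B i.i.d. Unif[0,1] variables. Then for every α ∈ (0,1) and all sequences B_k → ∞ and n_k → ∞, P(S_{B_k,n_k} > c_{B_k}(α)) → 1 as k → ∞; that is, the α-level global goodness-of-fit test based on the Kolmogorov–Smirnov statistic is statistically consistent. -/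
open MeasureTheory Filter
open scoped ENNReal Classical

/-- Empirical cumulative distribution function of the first `B` of the random
variables `X` evaluated at the sample point `ω` and the argument `t`:
`F̂_B(t) = (1/B) · #{ i < B : X i ω ≤ t }`. -/
noncomputable def ecdf {Ω : Type*} (X : ℕ → Ω → ℝ) (B : ℕ) (ω : Ω) (t : ℝ) : ℝ :=
  ((Finset.range B).filter (fun i => X i ω ≤ t)).card / B

/-- The Kolmogorov–Smirnov statistic against the uniform distribution on `[0,1]`
computed from the first `B` of the random variables `X`:
`S_B = sup_{t ∈ [0,1]} |F̂_B(t) - t|`. -/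
noncomputable def ksStat {Ω : Type*} (X : ℕ → Ω → ℝ) (B : ℕ) (ω : Ω) : ℝ :=
  ⨆ t : Set.Icc (0 : ℝ) 1, |ecdf X B ω ↑t - ↑t|

/-!
If `w = r(D)`, Fatou's lemma shows that for large `n` a local `p`-value falls in `[0, w/4]` with
probability more than `w/2`. For i.i.d. samples, `B · F̂_B(t)` is binomial, so Chebyshev's
inequality makes `F̂_B(t)` concentrate at its mean uniformly in the law. At `t = w/4` this gives
`S_{B,n} ≥ F̂_B(w/4) - w/4 > w/8` with probability tending to one. Applied to uniform samples on a
grid of mesh `1/m`, together with the monotonicity of `F̂_B`, it shows that the null KS statistic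
tends to `0` in probability, hence so do the critical values `c_B`, which eventually drop below
`w/8`.
-/

open ProbabilityTheory Set
open scoped Topology

section Deterministic

variable {Ω : Type*} (X : ℕ → Ω → ℝ) (B : ℕ) (ω : Ω)

lemma ecdf_mem_Icc (t : ℝ) : ecdf X B ω t ∈ Icc (0 : ℝ) 1 := by
  refine ⟨by unfold ecdf; positivity, div_le_one_of_le₀ ?_ B.cast_nonneg⟩
  exact_mod_cast (Finset.card_filter_le _ _).trans_eq (Finset.card_range B)

lemma ecdf_eq_sum_indicator (t : ℝ) :
    ecdf X B ω t = (∑ i ∈ Finset.range B, (X i ⁻¹' Iic t).indicator 1 ω) / B := by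
  rw [ecdf, Finset.natCast_card_filter]
  simp only [indicator_apply, mem_preimage, mem_Iic, Pi.one_apply]

lemma ecdf_mono : Monotone (ecdf X B ω) := fun s t hst => by
  unfold ecdf
  gcongr

lemma bddAbove_abs_ecdf_sub :
    BddAbove (range fun t : Icc (0 : ℝ) 1 => |ecdf X B ω t - t|) := by
  refine ⟨1, ?_⟩
  rintro _ ⟨⟨t, ht⟩, rfl⟩
  have := ecdf_mem_Icc X B ω t
  exact abs_sub_le_iff.2 ⟨by linarith [this.2, ht.1], by linarith [this.1, ht.2]⟩

lemma abs_ecdf_sub_le_ksStat {t : ℝ} (ht : t ∈ Icc (0 : ℝ) 1) :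
    |ecdf X B ω t - t| ≤ ksStat X B ω :=
  le_ciSup (bddAbove_abs_ecdf_sub X B ω) ⟨t, ht⟩

lemma ksStat_nonneg : 0 ≤ ksStat X B ω :=
  (abs_nonneg _).trans (abs_ecdf_sub_le_ksStat X B ω (left_mem_Icc.2 zero_le_one))

lemma ksStat_le_of_grid {m : ℕ} (hm : 0 < m) {δ : ℝ}
    (h : ∀ j ≤ m, |ecdf X B ω (j / m) - j / m| ≤ δ) : ksStat X B ω ≤ δ + 1 / m := by
  have hmR : (0 : ℝ) < m := by exact_mod_cast hm
  refine ciSup_le fun ⟨t, ht0, ht1⟩ => ?_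
  set a := (⌊t * m⌋₊ : ℝ) / m
  set b := (⌈t * m⌉₊ : ℝ) / m
  have htm : t * m ≤ m := by nlinarith
  have ha := h _ (Nat.floor_le_of_le (by exact_mod_cast htm))
  have hb := h _ (Nat.ceil_le.2 htm)
  have hat : a ≤ t := div_le_of_le_mul₀ hmR.le ht0 (Nat.floor_le (by positivity))
  have htb : t ≤ b := (le_div_iff₀ hmR).2 (Nat.le_ceil _)
  have hba : b - a ≤ 1 / m := by
    rw [← sub_div]
    gcongr
    have := Nat.ceil_le_floor_add_one (t * m)
    linarith [show ((⌈t * m⌉₊ : ℕ) : ℝ) ≤ ⌊t * m⌋₊ + 1 by exact_mod_cast this]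
  have hFa := ecdf_mono X B ω hat
  have hFb := ecdf_mono X B ω htb
  rw [abs_le] at ha hb ⊢
  constructor <;> linarith [ha.1, hb.2]

end Deterministic

lemma csInf_quantile_le {Ω : Type*} [MeasurableSpace Ω] {μ : Measure Ω} {Z : Ω → ℝ}
    (hZ : ∀ ω, 0 ≤ Z ω) {α η : ℝ} (hα : α < 1) (h : 1 - α ≤ (μ {ω | Z ω ≤ η}).toReal) :
    sInf {t : ℝ | 1 - α ≤ (μ {ω | Z ω ≤ t}).toReal} ≤ η := by
  refine csInf_le ⟨0, fun t ht => ?_⟩ h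
  by_contra! htneg
  have hempty : {ω | Z ω ≤ t} = ∅ :=
    eq_empty_of_forall_notMem fun ω hω => (hZ ω).not_gt (lt_of_le_of_lt hω htneg)
  have ht' : 1 - α ≤ (μ {ω | Z ω ≤ t}).toReal := ht
  rw [hempty, measure_empty, ENNReal.toReal_zero] at ht'
  linarith

theorem le_liminf_bind_apply {Θ β : Type*} [MeasurableSpace Θ] [MeasurableSpace β]
    (r : Measure Θ) {D : Set Θ} (hD : MeasurableSet D) {κ : ℕ → Kernel Θ β} {s : Set β}
    (hs : MeasurableSet s) (h : ∀ θ ∈ D, Tendsto (fun n => κ n θ s) atTop (𝓝 1)) :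
    r D ≤ liminf (fun n => (κ n ∘ₘ r) s) atTop := by
  calc r D = ∫⁻ θ in D, liminf (fun n => κ n θ s) atTop ∂r := by
        rw [setLIntegral_congr_fun hD fun θ hθ => (h θ hθ).liminf_eq, setLIntegral_const, one_mul]
    _ ≤ liminf (fun n => ∫⁻ θ in D, κ n θ s ∂r) atTop :=
        lintegral_liminf_le fun n => (κ n).measurable_coe hs
    _ ≤ liminf (fun n => (κ n ∘ₘ r) s) atTop := by
        refine liminf_le_liminf (Eventually.of_forall fun n => ?_)
        rw [Measure.bind_apply hs (κ n).measurable.aemeasurable]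
        exact setLIntegral_le_lintegral _ _

section IidSamples

variable {Ω : Type*} [MeasurableSpace Ω] {μ : Measure Ω} [IsProbabilityMeasure μ]
  {ι : Type*} {l : Filter ι}

/-- Chebyshev's inequality for the empirical CDF: `B · F̂_B(t)` is a sum of `B` independent
Bernoulli variables of variance at most `1/4`. -/
theorem measure_le_abs_ecdf_sub_le {X : ℕ → Ω → ℝ} (hX : ∀ i, Measurable (X i))
    (hind : iIndepFun X μ) {ν : Measure ℝ} (hlaw : ∀ i, μ.map (X i) = ν) {B : ℕ} (hB : 0 < B)
    (t : ℝ) {δ : ℝ} (hδ : 0 < δ) :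
    μ {ω | δ ≤ |ecdf X B ω t - ν.real (Iic t)|} ≤ ENNReal.ofReal (1 / (4 * B * δ ^ 2)) := by
  set Y : ℕ → Ω → ℝ := fun i => (X i ⁻¹' Iic t).indicator 1
  set S := ∑ i ∈ Finset.range B, Y i
  have hBR : (0 : ℝ) < B := by exact_mod_cast hB
  have hYmeas i : Measurable (Y i) := measurable_const.indicator (hX i measurableSet_Iic)
  have hYmem i ω : Y i ω ∈ Icc (0 : ℝ) 1 := by
    simp only [Y, indicator_apply]; split_ifs <;> simp
  have hYL2 i : MemLp (Y i) 2 μ :=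
    memLp_of_bounded (ae_of_all μ (hYmem i)) (hYmeas i).aestronglyMeasurable 2
  have hmean : ∫ ω, S ω ∂μ = B * ν.real (Iic t) := by
    simp only [S, Finset.sum_apply]
    rw [integral_finsetSum _ fun i _ => (hYL2 i).integrable one_le_two]
    simp [Y, integral_indicator_one (hX _ measurableSet_Iic),
      ← map_measureReal_apply (hX _) measurableSet_Iic, hlaw]
  have hvar : variance S μ ≤ B / 4 := by
    rw [IndepFun.variance_sum (fun i _ => hYL2 i) fun i _ j _ hij =>
      (hind.indepFun hij).comp (measurable_const.indicator measurableSet_Iic)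
        (measurable_const.indicator measurableSet_Iic)]
    calc ∑ i ∈ Finset.range B, variance (Y i) μ ≤ ∑ _i ∈ Finset.range B, ((1 - 0) / 2) ^ 2 :=
          Finset.sum_le_sum fun i _ =>
            variance_le_sq_of_bounded (ae_of_all μ (hYmem i)) (hYmeas i).aemeasurable
      _ = B / 4 := by simp; ring
  have hsub : {ω | δ ≤ |ecdf X B ω t - ν.real (Iic t)|} ⊆
      {ω | B * δ ≤ |S ω - ∫ ω, S ω ∂μ|} := by
    intro ω hω
    have hS : ecdf X B ω t = S ω / B := by simp [ecdf_eq_sum_indicator, S, Y]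
    have hscale : S ω - B * ν.real (Iic t) = B * (S ω / B - ν.real (Iic t)) := by field_simp
    change δ ≤ |ecdf X B ω t - ν.real (Iic t)| at hω
    change B * δ ≤ |S ω - ∫ ω, S ω ∂μ|
    rw [hmean, hscale, abs_mul, abs_of_pos hBR, ← hS]
    gcongr
  calc μ _ ≤ μ {ω | B * δ ≤ |S ω - ∫ ω, S ω ∂μ|} := measure_mono hsub
    _ ≤ ENNReal.ofReal (variance S μ / (B * δ) ^ 2) :=
        meas_ge_le_variance_div_sq (memLp_finsetSum' _ fun i _ => hYL2 i) (by positivity)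
    _ ≤ ENNReal.ofReal (1 / (4 * B * δ ^ 2)) := ENNReal.ofReal_le_ofReal <| by
        calc variance S μ / (B * δ) ^ 2 ≤ B / 4 / (B * δ) ^ 2 := by gcongr
          _ = 1 / (4 * B * δ ^ 2) := by field_simp

lemma tendsto_measure_one_of_compl_subset {A E : ι → Set Ω}
    (hE : Tendsto (fun j => μ (E j)) l (𝓝 0)) (hsub : ∀ᶠ j in l, (E j)ᶜ ⊆ A j) :
    Tendsto (fun j => μ (A j)) l (𝓝 1) := by
  have hlow : Tendsto (fun j => 1 - μ (E j)) l (𝓝 1) := by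
    simpa using ENNReal.Tendsto.sub tendsto_const_nhds hE (Or.inl ENNReal.one_ne_top)
  refine tendsto_of_tendsto_of_tendsto_of_le_of_le' hlow tendsto_const_nhds ?_
    (Eventually.of_forall fun _ => prob_le_one)
  filter_upwards [hsub] with j hj
  calc 1 - μ (E j) = μ univ - μ (E j) := by rw [measure_univ]
    _ ≤ μ (univ \ E j) := le_measure_sdiff
    _ ≤ μ (A j) := measure_mono (by rwa [← compl_eq_univ_sdiff])

theorem tendsto_measure_le_abs_ecdf_sub {X : ι → ℕ → Ω → ℝ} (hX : ∀ j i, Measurable (X j i))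
    (hind : ∀ j, iIndepFun (X j) μ) {ν : ι → Measure ℝ} (hlaw : ∀ j i, μ.map (X j i) = ν j)
    {B : ι → ℕ} (hB : Tendsto B l atTop) (t : ℝ) {δ : ℝ} (hδ : 0 < δ) :
    Tendsto (fun j => μ {ω | δ ≤ |ecdf (X j) (B j) ω t - (ν j).real (Iic t)|}) l (𝓝 0) := by
  have hbound : Tendsto (fun j => ENNReal.ofReal (1 / (4 * δ ^ 2) / B j)) l (𝓝 0) := by
    simpa using ENNReal.tendsto_ofReal ((tendsto_const_div_atTop_nhds_zero_nat _).comp hB)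
  refine tendsto_of_tendsto_of_tendsto_of_le_of_le' tendsto_const_nhds hbound
    (Eventually.of_forall fun _ => zero_le) ?_
  filter_upwards [hB.eventually (eventually_gt_atTop 0)] with j hj
  refine (measure_le_abs_ecdf_sub_le (hX j) (hind j) (hlaw j) hj t hδ).trans_eq ?_
  congr 1
  field_simp

lemma uniform_real_Iic {x : ℝ} (hx : x ∈ Icc (0 : ℝ) 1) :
    (volume.restrict (Icc (0 : ℝ) 1)).real (Iic x) = x := by
  rw [measureReal_restrict_apply measurableSet_Iic, inter_comm, ← Ici_inter_Iic, inter_assoc,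
    Iic_inter_Iic, min_eq_right hx.2, Ici_inter_Iic, Real.volume_real_Icc, sub_zero,
    max_eq_left hx.1]

theorem tendsto_measure_ksStat_le {U : ℕ → Ω → ℝ} (hU : ∀ i, Measurable (U i))
    (hind : iIndepFun U μ) (hlaw : ∀ i, μ.map (U i) = volume.restrict (Icc (0 : ℝ) 1))
    {η : ℝ} (hη : 0 < η) :
    Tendsto (fun B => μ {ω | ksStat U B ω ≤ η}) atTop (𝓝 1) := by
  obtain ⟨m, hm⟩ := exists_nat_gt (2 / η)
  have hm0 : (0 : ℝ) < m := (by positivity : (0 : ℝ) < 2 / η).trans hm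
  have hmesh : 1 / (m : ℝ) < η / 2 := by
    rw [div_lt_iff₀ hm0]; rw [div_lt_iff₀ hη] at hm; linarith
  have hgrid j (hj : j ≤ m) : (j : ℝ) / m ∈ Icc (0 : ℝ) 1 :=
    ⟨by positivity, div_le_one_of_le₀ (by exact_mod_cast hj) hm0.le⟩
  set bad : ℕ → ℕ → Set Ω := fun j B =>
    {ω | η / 2 ≤ |ecdf U B ω (j / m) - (volume.restrict (Icc (0 : ℝ) 1)).real (Iic (j / m))|}
  refine tendsto_measure_one_of_compl_subset (E := fun B => ⋃ j ∈ Finset.range (m + 1), bad j B)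
    ?_ (Eventually.of_forall fun B ω hω => ?_)
  · have hsum : Tendsto (fun B => ∑ j ∈ Finset.range (m + 1), μ (bad j B)) atTop (𝓝 0) := by
      have := tendsto_finsetSum (Finset.range (m + 1)) fun j _ =>
        tendsto_measure_le_abs_ecdf_sub (X := fun _ => U) (fun _ => hU) (fun _ => hind)
          (fun _ => hlaw) tendsto_id ((j : ℝ) / m) (half_pos hη)
      rwa [Finset.sum_const_zero] at this
    exact tendsto_of_tendsto_of_tendsto_of_le_of_le tendsto_const_nhds hsum
      (fun _ => zero_le) fun B => measure_biUnion_finset_le _ _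
  · simp only [mem_compl_iff, mem_iUnion, Finset.mem_range, not_exists] at hω
    refine (ksStat_le_of_grid U B ω (Nat.cast_pos.1 hm0) fun j hj => ?_).trans
      (by linarith : η / 2 + 1 / (m : ℝ) ≤ η)
    have hj' : ¬ η / 2 ≤
        |ecdf U B ω (j / m) - (volume.restrict (Icc (0 : ℝ) 1)).real (Iic (j / m))| :=
      hω j (Nat.lt_succ_of_le hj)
    rw [uniform_real_Iic (hgrid j hj)] at hj'
    exact (not_le.1 hj').le

theorem eventually_ksQuantile_le {U : ℕ → Ω → ℝ} (hU : ∀ i, Measurable (U i))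
    (hind : iIndepFun U μ) (hlaw : ∀ i, μ.map (U i) = volume.restrict (Icc (0 : ℝ) 1))
    {α : ℝ} (hα : α ∈ Ioo (0 : ℝ) 1) {η : ℝ} (hη : 0 < η) :
    ∀ᶠ B in atTop, sInf {t : ℝ | 1 - α ≤ (μ {ω | ksStat U B ω ≤ t}).toReal} ≤ η := by
  have hlt : ENNReal.ofReal (1 - α) < 1 := ENNReal.ofReal_lt_one.2 (by linarith [hα.1])
  filter_upwards [(tendsto_order.1 (tendsto_measure_ksStat_le hU hind hlaw hη)).1 _ hlt]
    with B hB
  refine csInf_quantile_le (ksStat_nonneg U B) hα.2 ?_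
  exact ((ENNReal.ofReal_lt_iff_lt_toReal (by linarith [hα.2]) (measure_ne_top _ _)).1 hB).le

theorem tendsto_measure_lt_ksStat {X : ι → ℕ → Ω → ℝ}
    (hX : ∀ j i, Measurable (X j i)) (hind : ∀ j, iIndepFun (X j) μ) {ν : ι → Measure ℝ}
    (hlaw : ∀ j i, μ.map (X j i) = ν j) {B : ι → ℕ} (hB : Tendsto B l atTop) {t β a : ℝ}
    (ht : t ∈ Icc (0 : ℝ) 1) (hβ : ∀ᶠ j in l, β < (ν j).real (Iic t)) (ha : a + t < β) :
    Tendsto (fun j => μ {ω | a < ksStat (X j) (B j) ω}) l (𝓝 1) := by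
  refine tendsto_measure_one_of_compl_subset
    (tendsto_measure_le_abs_ecdf_sub hX hind hlaw hB t (sub_pos.2 ha)) ?_
  filter_upwards [hβ] with j hj ω hω
  have hclose : |ecdf (X j) (B j) ω t - (ν j).real (Iic t)| < β - (a + t) := not_le.1 hω
  have hks := (le_abs_self _).trans (abs_ecdf_sub_le_ksStat (X j) (B j) ω ht)
  show a < ksStat (X j) (B j) ω
  linarith [(abs_lt.1 hclose).1]

end IidSamples

theorem global_ks_test_consistent_general
    {Θ : Type*} [MeasurableSpace Θ] (r : Measure Θ) [IsProbabilityMeasure r]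
    (D : Set Θ) (hD : MeasurableSet D) (hw : 0 < r D)
    (κ : ℕ → ProbabilityTheory.Kernel Θ ℝ)
    (halt : ∀ θ ∈ D, ∀ ε > (0 : ℝ),
      Tendsto (fun n => (κ n) θ (Set.Icc (0 : ℝ) ε)) atTop (nhds 1))
    {Ω : Type*} [MeasurableSpace Ω] (μ : Measure Ω) [IsProbabilityMeasure μ]
    (p : ℕ → ℕ → Ω → ℝ) (hpmeas : ∀ n i, Measurable (p n i))
    (hpindep : ∀ n, ProbabilityTheory.iIndepFun (p n) μ)
    (hplaw : ∀ n i, μ.map (p n i) = r.bind (fun θ => (κ n) θ))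
    {Ω' : Type*} [MeasurableSpace Ω'] (μ' : Measure Ω') [IsProbabilityMeasure μ']
    (U : ℕ → Ω' → ℝ) (hUmeas : ∀ i, Measurable (U i))
    (hUindep : ProbabilityTheory.iIndepFun U μ')
    (hUlaw : ∀ i, μ'.map (U i) = volume.restrict (Set.Icc (0 : ℝ) 1))
    (α : ℝ) (hα : α ∈ Set.Ioo (0 : ℝ) 1)
    (c : ℕ → ℝ)
    (hc : ∀ B, c B = sInf {t : ℝ | 1 - α ≤ (μ' {ω' | ksStat U B ω' ≤ t}).toReal})
    (Bk nk : ℕ → ℕ) (hBk : Tendsto Bk atTop atTop) (hnk : Tendsto nk atTop atTop) :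
    Tendsto (fun j => μ {ω | c (Bk j) < ksStat (p (nk j)) (Bk j) ω}) atTop
      (nhds 1) := by
  set w := r.real D
  have hw0 : 0 < w := ENNReal.toReal_pos hw.ne' (measure_ne_top r D)
  have hw1 : w ≤ 1 := measureReal_le_one
  have hmix : ∀ᶠ j in atTop, w / 2 < (r.bind fun θ => κ (nk j) θ).real (Iic (w / 4)) := by
    have hlim := le_liminf_bind_apply r hD measurableSet_Icc fun θ hθ =>
      halt θ hθ (w / 4) (by positivity)
    have hlt : ENNReal.ofReal (w / 2) < r D := by
      rw [← ofReal_measureReal]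
      exact ENNReal.ofReal_lt_ofReal_iff hw0 |>.2 (by linarith)
    filter_upwards [hnk.eventually (eventually_lt_of_lt_liminf (hlt.trans_le hlim))] with j hj
    rw [← hplaw (nk j) 0] at hj ⊢
    exact (ENNReal.ofReal_lt_iff_lt_toReal (by positivity) (measure_ne_top _ _)).1
      (hj.trans_le (measure_mono Icc_subset_Iic_self))
  have hreject : Tendsto (fun j => μ {ω | w / 8 < ksStat (p (nk j)) (Bk j) ω}) atTop (𝓝 1) :=
    tendsto_measure_lt_ksStat (fun j => hpmeas (nk j)) (fun j => hpindep (nk j))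
      (fun j => hplaw (nk j)) hBk ⟨by positivity, by linarith⟩ hmix (by linarith)
  have hquantile : ∀ᶠ j in atTop, c (Bk j) ≤ w / 8 :=
    (hBk.eventually (eventually_ksQuantile_le hUmeas hUindep hUlaw hα (by positivity))).mono
      fun j h => (hc _).trans_le h
  refine tendsto_of_tendsto_of_tendsto_of_le_of_le' hreject tendsto_const_nhds ?_
    (Eventually.of_forall fun _ => prob_le_one)
  filter_upwards [hquantile] with j hj
  exact measure_mono fun ω hω => hj.trans_lt hω

/-- **Corollary 1, Kolmogorov–Smirnov version: consistency of the global test.**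
Let `r` be a probability measure on the parameter space `Θ` and `D ⊆ Θ` with
`r(D) > 0` (Assumption 1).  For each `n`, the Markov kernel `κ n` of local `p`-values
is uniform on `[0,1]` off `D` and concentrates at `0` on `D` as `n → ∞` (Assumption 2).
If `p n 1, …, p n B` are (i.i.d.) local `p`-values, whose common law is the mixture
`r.bind (κ n)` obtained by drawing `θ_i ~ r` and then `p_i ~ κ n θ_i`, if
`S_{B,n}` is their Kolmogorov–Smirnov statistic against the uniform distribution, and
if `c B` is the `(1-α)`-quantile of the KS statistic of `B` i.i.d. `Unif[0,1]`
variables, then for all sequences `B_k → ∞` and `n_k → ∞` the probability of rejection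
`P(S_{B_k,n_k} > c_{B_k})` tends to `1`. -/
theorem global_ks_test_consistent
    {Θ : Type*} [MeasurableSpace Θ] (r : Measure Θ) [IsProbabilityMeasure r]
    (D : Set Θ) (hD : MeasurableSet D) (hw : 0 < r D)
    (κ : ℕ → ProbabilityTheory.Kernel Θ ℝ)
    (hκ : ∀ n, ProbabilityTheory.IsMarkovKernel (κ n))
    (hnull : ∀ n, ∀ θ ∉ D, (κ n) θ = volume.restrict (Set.Icc (0 : ℝ) 1))
    (halt : ∀ θ ∈ D, ∀ ε > (0 : ℝ),
      Tendsto (fun n => (κ n) θ (Set.Icc (0 : ℝ) ε)) atTop (nhds 1))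
    {Ω : Type*} [MeasurableSpace Ω] (μ : Measure Ω) [IsProbabilityMeasure μ]
    (p : ℕ → ℕ → Ω → ℝ) (hpmeas : ∀ n i, Measurable (p n i))
    (hpindep : ∀ n, ProbabilityTheory.iIndepFun (p n) μ)
    (hplaw : ∀ n i, μ.map (p n i) = r.bind (fun θ => (κ n) θ))
    {Ω' : Type*} [MeasurableSpace Ω'] (μ' : Measure Ω') [IsProbabilityMeasure μ']
    (U : ℕ → Ω' → ℝ) (hUmeas : ∀ i, Measurable (U i))
    (hUindep : ProbabilityTheory.iIndepFun U μ')
    (hUlaw : ∀ i, μ'.map (U i) = volume.restrict (Set.Icc (0 : ℝ) 1))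
    (α : ℝ) (hα : α ∈ Set.Ioo (0 : ℝ) 1)
    (c : ℕ → ℝ)
    (hc : ∀ B, c B = sInf {t : ℝ | 1 - α ≤ (μ' {ω' | ksStat U B ω' ≤ t}).toReal})
    (Bk nk : ℕ → ℕ) (hBk : Tendsto Bk atTop atTop) (hnk : Tendsto nk atTop atTop) :
    Tendsto (fun j => μ {ω | c (Bk j) < ksStat (p (nk j)) (Bk j) ω}) atTop
      (nhds 1) :=
  global_ks_test_consistent_general r D hD hw κ halt μ p hpmeas hpindep hplaw μ' U hUmeas hUindep
    hUlaw α hα c hc Bk nk hBk hnk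
end

section
/- (Exact uniformity of the Monte-Carlo p-value under the null, used for the goodness-of-fit test via Monte Carlo sampling.) Let T₀, T₁, …, T_M be i.i.d. real-valued random variables with an atomless (continuous) common distribution. Then the p-value p = (1 + #{ 1 ≤ m ≤ M : T_m ≥ T₀ })/(M+1) is uniformly distributed on the set { 1/(M+1), 2/(M+1), …, (M+1)/(M+1) }; in particular, P(p ≤ k/(M+1)) = k/(M+1) for every integer 1 ≤ k ≤ M+1. -/
open MeasureTheory Filter
open scoped ENNReal Classical

/-- The Monte Carlo `p`-value computed from the observed statistic `T 0` and the
reference statistics `T 1, …, T M`: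
`p = (1 + #{ 1 ≤ m ≤ M : T m ≥ T 0 }) / (M + 1)`. -/
noncomputable def mcPValue {Ω : Type*} (M : ℕ) (T : Fin (M + 1) → Ω → ℝ) (ω : Ω) : ℝ :=
  (1 + ((Finset.univ.filter (fun m : Fin (M + 1) => m ≠ 0 ∧ T 0 ω ≤ T m ω)).card : ℝ)) /
    (M + 1)

/-!
Under the null hypothesis the vector `(T 0, …, T M)` is exchangeable and almost surely has
distinct entries. For a vector with distinct entries, `i ↦ geCount x i` (the number of other
entries `≥ x i`) is a bijection onto `{0, …, M}`, so for each `j` the events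
`{geCount x i = j}`, `i ≤ M`, partition the sample space up to a null set. Exchangeability
makes them equiprobable, hence each has probability `1 / (M + 1)`; the `p`-value is
`(1 + geCount x 0) / (M + 1)`.
-/

section geCount

variable {ι α : Type*} [Fintype ι] [DecidableEq ι] [LinearOrder α]

def geCount (x : ι → α) (i : ι) : ℕ :=
  (Finset.univ.filter fun m => m ≠ i ∧ x i ≤ x m).card

theorem geCount_lt_card (x : ι → α) (i : ι) : geCount x i < Fintype.card ι :=
  Finset.card_lt_card <| Finset.filter_ssubset.2 ⟨i, Finset.mem_univ i, by simp⟩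

theorem geCount_comp_perm (x : ι → α) (σ : Equiv.Perm ι) (i : ι) :
    geCount (x ∘ σ) i = geCount x (σ i) :=
  Finset.card_equiv σ fun m => by simp

theorem geCount_lt_geCount_of_lt {x : ι → α} {i j : ι} (h : x i < x j) :
    geCount x j < geCount x i := by
  refine Finset.card_lt_card (Finset.ssubset_iff_of_subset ?_ |>.2 ⟨j, ?_, ?_⟩)
  · intro m hm
    simp only [Finset.mem_filter, Finset.mem_univ, true_and] at hm ⊢
    exact ⟨by rintro rfl; exact (h.trans_le hm.2).false, h.le.trans hm.2⟩
  · simp [ne_of_apply_ne x h.ne', h.le]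
  · simp

theorem geCount_injective {x : ι → α} (hx : Function.Injective x) :
    Function.Injective (geCount x) := by
  intro i j hij
  by_contra hne
  rcases (hx.ne hne).lt_or_gt with h | h
  · exact (geCount_lt_geCount_of_lt h).ne' hij
  · exact (geCount_lt_geCount_of_lt h).ne hij

theorem exists_geCount_eq {x : ι → α} (hx : Function.Injective x) {j : ℕ}
    (hj : j < Fintype.card ι) : ∃ i, geCount x i = j := by
  let f : ι → Fin (Fintype.card ι) := fun i => ⟨geCount x i, geCount_lt_card x i⟩
  have hf : Function.Bijective f :=
    (Fintype.bijective_iff_injective_and_card f).2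
      ⟨fun i k h => geCount_injective hx (Fin.ext_iff.1 h), (Fintype.card_fin _).symm⟩
  obtain ⟨i, hi⟩ := hf.2 ⟨j, hj⟩
  exact ⟨i, Fin.ext_iff.1 hi⟩

end geCount

section measure

variable {ι : Type*} [Fintype ι] [DecidableEq ι]

theorem measurable_geCount (i : ι) : Measurable fun x : ι → ℝ => geCount x i := by
  simp only [geCount, Finset.card_filter]
  refine Finset.measurable_sum _ fun m _ => Measurable.ite ?_ measurable_const measurable_const
  exact (MeasurableSet.const _).inter
    (measurableSet_le (measurable_pi_apply i) (measurable_pi_apply m))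

theorem measurableSet_geCount_eq (i : ι) (j : ℕ) : MeasurableSet {x : ι → ℝ | geCount x i = j} :=
  measurable_geCount i (measurableSet_singleton j)

theorem measurableSet_geCount_lt (i : ι) (k : ℕ) : MeasurableSet {x : ι → ℝ | geCount x i < k} :=
  measurable_geCount i measurableSet_Iio

variable {ν : Measure (ι → ℝ)}

theorem measure_geCount_eq_of_perm_invariant
    (hperm : ∀ σ : Equiv.Perm ι, ν.map (fun x => x ∘ σ) = ν) (i k : ι) (j : ℕ) :
    ν {x | geCount x k = j} = ν {x | geCount x i = j} := by
  have hσ : Measurable fun x : ι → ℝ => x ∘ Equiv.swap i k :=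
    measurable_pi_lambda _ fun m => measurable_pi_apply _
  have hpre : (fun x : ι → ℝ => x ∘ Equiv.swap i k) ⁻¹' {x | geCount x i = j} =
      {x | geCount x k = j} := by
    ext x
    simp [geCount_comp_perm]
  rw [← hpre, ← Measure.map_apply hσ (measurableSet_geCount_eq i j), hperm]

theorem ae_injective_of_measure_eq_eq_zero
    (hties : ∀ a b : ι, a ≠ b → ν {x | x a = x b} = 0) : ∀ᵐ x ∂ν, Function.Injective x := by
  have hne : ∀ᵐ x ∂ν, ∀ a b : ι, a ≠ b → x a ≠ x b :=
    ae_all_iff.2 fun a => ae_all_iff.2 fun b => by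
      by_cases hab : a = b
      · simp [hab]
      · simpa [hab, ae_iff] using hties a b hab
  filter_upwards [hne] with x hx a b hxab
  by_contra hab
  exact hx a b hab hxab

theorem sum_measure_geCount_eq (hinj : ∀ᵐ x ∂ν, Function.Injective x) {j : ℕ}
    (hj : j < Fintype.card ι) : ∑ i, ν {x | geCount x i = j} = ν Set.univ := by
  have hnull : ν {x | ¬Function.Injective x} = 0 := ae_iff.1 hinj
  rw [← tsum_fintype (L := .unconditional _), ← measure_iUnion₀ (fun a b hab => ?_) fun i =>
    (measurableSet_geCount_eq i j).nullMeasurableSet]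
  · refine measure_congr (ae_eq_univ.2 (measure_mono_null ?_ hnull))
    intro x hx hx_inj
    exact hx (Set.mem_iUnion.2 (exists_geCount_eq hx_inj hj))
  · refine measure_mono_null ?_ hnull
    intro x hx hx_inj
    exact hab (geCount_injective hx_inj (hx.1.trans hx.2.symm))

theorem measure_geCount_eq [IsProbabilityMeasure ν]
    (hperm : ∀ σ : Equiv.Perm ι, ν.map (fun x => x ∘ σ) = ν)
    (hinj : ∀ᵐ x ∂ν, Function.Injective x) (i : ι) {j : ℕ} (hj : j < Fintype.card ι) :
    ν {x | geCount x i = j} = (Fintype.card ι : ℝ≥0∞)⁻¹ := by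
  have hsum := sum_measure_geCount_eq hinj hj
  simp only [measure_geCount_eq_of_perm_invariant hperm i, Finset.sum_const, Finset.card_univ,
    nsmul_eq_mul, measure_univ] at hsum
  exact ENNReal.eq_inv_of_mul_eq_one_left (by rwa [mul_comm])

theorem measure_geCount_lt [IsProbabilityMeasure ν]
    (hperm : ∀ σ : Equiv.Perm ι, ν.map (fun x => x ∘ σ) = ν)
    (hinj : ∀ᵐ x ∂ν, Function.Injective x) (i : ι) {k : ℕ} (hk : k ≤ Fintype.card ι) :
    ν {x | geCount x i < k} = k * (Fintype.card ι : ℝ≥0∞)⁻¹ := by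
  have hunion : {x : ι → ℝ | geCount x i < k} = ⋃ j ∈ Finset.range k, {x | geCount x i = j} := by
    ext x
    simp
  rw [hunion, measure_biUnion_finset (fun a _ b _ hab => ?_) fun j _ =>
    measurableSet_geCount_eq i j]
  · rw [Finset.sum_congr rfl fun j hj => measure_geCount_eq hperm hinj i
      ((Finset.mem_range.1 hj).trans_le hk)]
    simp
  · exact Set.disjoint_left.2 fun x hxa hxb => hab (hxa.symm.trans hxb)

end measure

theorem MeasureTheory.Measure.pi_map_comp_perm {ι β : Type*} [Fintype ι] [MeasurableSpace β]
    (P : Measure β) [SigmaFinite P] (σ : Equiv.Perm ι) :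
    (Measure.pi fun _ : ι => P).map (fun x => x ∘ σ) = Measure.pi fun _ => P :=
  (measurePreserving_arrowCongr' (fun _ => P) (fun _ => P) σ.symm (MeasurableEquiv.refl β)
    fun _ => MeasurePreserving.id P).map_eq

section independence

variable {Ω : Type*} [MeasurableSpace Ω] {μ : Measure Ω} [IsFiniteMeasure μ]

theorem ProbabilityTheory.IndepFun.measure_eq_eq_zero {X Y : Ω → ℝ} (hX : Measurable X)
    (hY : Measurable Y) (hXY : ProbabilityTheory.IndepFun X Y μ)
    (hY_atomless : ∀ t, μ.map Y {t} = 0) : μ {ω | X ω = Y ω} = 0 := by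
  have hdiag : MeasurableSet {p : ℝ × ℝ | p.1 = p.2} :=
    measurableSet_eq_fun measurable_fst measurable_snd
  have hprod := (ProbabilityTheory.indepFun_iff_map_prod_eq_prod_map_map hX.aemeasurable
    hY.aemeasurable).1 hXY
  rw [← Set.preimage_ofPred_eq (p := fun p : ℝ × ℝ => p.1 = p.2) (f := fun ω => (X ω, Y ω)),
    ← Measure.map_apply (hX.prodMk hY) hdiag, hprod, Measure.measure_prod_null hdiag]
  refine Eventually.of_forall fun x => ?_
  simpa [eq_comm] using hY_atomless x

end independence

section mcPValue

variable {Ω : Type*} {M k : ℕ} {T : Fin (M + 1) → Ω → ℝ} {ω : Ω}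

theorem mcPValue_eq_natCast_div_iff (hk : 1 ≤ k) :
    mcPValue M T ω = k / (M + 1) ↔ geCount (fun m => T m ω) 0 = k - 1 := by
  change (1 + (geCount (fun m => T m ω) 0 : ℝ)) / (M + 1) = k / (M + 1) ↔ _
  rw [div_left_inj' (by positivity)]
  norm_cast
  omega

theorem mcPValue_le_natCast_div_iff :
    mcPValue M T ω ≤ k / (M + 1) ↔ geCount (fun m => T m ω) 0 < k := by
  change (1 + (geCount (fun m => T m ω) 0 : ℝ)) / (M + 1) ≤ k / (M + 1) ↔ _
  rw [div_le_div_iff_of_pos_right (by positivity)]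
  norm_cast
  omega

end mcPValue

/-- **Exact uniformity of the Monte Carlo `p`-value under the null** (used in the
goodness-of-fit test via Monte Carlo sampling).  If `T 0, T 1, …, T M` are i.i.d. with
an atomless common distribution, then the Monte Carlo `p`-value is uniformly
distributed on `{1/(M+1), 2/(M+1), …, (M+1)/(M+1)}`; in particular
`P(p ≤ k/(M+1)) = k/(M+1)` for every integer `1 ≤ k ≤ M + 1`. -/
theorem mcPValue_uniform_of_iid_atomless
    {Ω : Type*} [MeasurableSpace Ω] (μ : Measure Ω) [IsProbabilityMeasure μ]
    (M : ℕ) (T : Fin (M + 1) → Ω → ℝ) (hmeas : ∀ m, Measurable (T m))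
    (hindep : ProbabilityTheory.iIndepFun T μ)
    (hident : ∀ m, μ.map (T m) = μ.map (T 0))
    (hatomless : ∀ t : ℝ, μ.map (T 0) {t} = 0) :
    ∀ k : ℕ, 1 ≤ k → k ≤ M + 1 →
      (μ {ω | mcPValue M T ω = k / (M + 1)}).toReal = 1 / (M + 1) ∧
      (μ {ω | mcPValue M T ω ≤ k / (M + 1)}).toReal = k / (M + 1) := by
  intro k hk₁ hk₂
  set X : Ω → Fin (M + 1) → ℝ := fun ω m => T m ω
  have hX : Measurable X := measurable_pi_lambda _ hmeas
  have hlaw : μ.map X = Measure.pi fun _ => μ.map (T 0) := by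
    rw [(ProbabilityTheory.iIndepFun_iff_map_fun_eq_pi_map fun m => (hmeas m).aemeasurable).1
      hindep, funext hident]
  have hperm (σ : Equiv.Perm (Fin (M + 1))) : (μ.map X).map (· ∘ σ) = μ.map X := by
    rw [hlaw, Measure.pi_map_comp_perm]
  have hinj : ∀ᵐ x ∂μ.map X, Function.Injective x := by
    refine ae_injective_of_measure_eq_eq_zero fun a b hab => ?_
    rw [Measure.map_apply hX
      (measurableSet_eq_fun (measurable_pi_apply a) (measurable_pi_apply b))]
    exact (hindep.indepFun hab).measure_eq_eq_zero (hmeas a) (hmeas b) (hident b ▸ hatomless)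
  have : IsProbabilityMeasure (μ.map X) := Measure.isProbabilityMeasure_map hX.aemeasurable
  have hcard : Fintype.card (Fin (M + 1)) = M + 1 := Fintype.card_fin _
  constructor
  · have hset : {ω | mcPValue M T ω = k / (M + 1)} = X ⁻¹' {x | geCount x 0 = k - 1} :=
      Set.ext fun ω => mcPValue_eq_natCast_div_iff hk₁
    rw [hset, ← Measure.map_apply hX (measurableSet_geCount_eq 0 _),
      measure_geCount_eq hperm hinj 0 (j := k - 1) (by omega), hcard, ENNReal.toReal_inv,
      ENNReal.toReal_natCast]
    push_cast; ring
  · have hset : {ω | mcPValue M T ω ≤ k / (M + 1)} = X ⁻¹' {x | geCount x 0 < k} :=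
      Set.ext fun ω => mcPValue_le_natCast_div_iff
    rw [hset, ← Measure.map_apply hX (measurableSet_geCount_lt 0 k),
      measure_geCount_lt hperm hinj 0 (by omega), hcard, ENNReal.toReal_mul, ENNReal.toReal_inv,
      ENNReal.toReal_natCast, ENNReal.toReal_natCast]
    push_cast; ring
end
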